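/- The Mainardi function of order 1/3 satisfies M_{1/3}(z) = 3^{2/3} Ai(z/3^{1/3}) for all real z, where Ai is the Airy function. -/
import Mathlib


/-- The Airy function `Ai`, defined through its Maclaurin series
`Ai(x) = (1/(3^{2/3} π)) ∑ₙ Γ((n+1)/3)/n! · sin(2(n+1)π/3) · (3^{1/3} x)ⁿ`. -/
noncomputable def airyAi (x : ℝ) : ℝ :=
  (1 / (3 ^ ((2 : ℝ) / 3) * Real.pi)) *
    ∑' n : ℕ, (Real.Gamma ((n + 1) / 3) / n.factorial) *
      Real.sin (2 * (n + 1) * Real.pi / 3) * (3 ^ ((1 : ℝ) / 3) * x) ^ n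

lemma mainardi_term_aux (z : ℝ) (n : ℕ)
    (hsin_ne : Real.sin (Real.pi * (((n : ℝ) + 1) / 3)) ≠ 0)
    (hcos2 : 2 * Real.cos (Real.pi * (((n : ℝ) + 1) / 3)) = (-1 : ℝ) ^ n) :
    (-z) ^ n / ((n.factorial : ℝ) * Real.Gamma ((-(1 / 3) : ℝ) * n + 2 / 3)) =
      1 / Real.pi * ((Real.Gamma ((n + 1) / 3) / n.factorial) *
        Real.sin (2 * (n + 1) * Real.pi / 3) * z ^ n) := by
  have hπ : Real.pi ≠ 0 := Real.pi_ne_zero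
  set s : ℝ := ((n : ℝ) + 1) / 3 with hsdef
  have hs : ((-(1 / 3) : ℝ)) * n + 2 / 3 = 1 - s := by rw [hsdef]; ring
  have href := Real.Gamma_mul_Gamma_one_sub s
  have href' : Real.Gamma s * Real.Gamma (1 - s) * Real.sin (Real.pi * s) = Real.pi := by
    rw [href, div_mul_cancel₀ _ hsin_ne]
  have hG_ne : Real.Gamma (1 - s) ≠ 0 := by
    intro h0
    rw [h0, mul_zero, zero_mul] at href'
    exact hπ href'.symm
  have hsin2 : Real.sin (2 * ((n : ℝ) + 1) * Real.pi / 3) =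
      2 * Real.sin (Real.pi * s) * Real.cos (Real.pi * s) := by
    have h2 : 2 * ((n : ℝ) + 1) * Real.pi / 3 = 2 * (Real.pi * s) := by rw [hsdef]; ring
    rw [h2, Real.sin_two_mul]
  have hkey : (-1 : ℝ) ^ n / Real.Gamma (1 - s) =
      Real.Gamma s * (2 * Real.sin (Real.pi * s) * Real.cos (Real.pi * s)) / Real.pi := by
    rw [div_eq_div_iff hG_ne hπ]
    linear_combination (-((-1 : ℝ) ^ n)) * href' -
      (Real.Gamma s * Real.Gamma (1 - s) * Real.sin (Real.pi * s)) * hcos2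
  have hneg : (-z) ^ n = (-1 : ℝ) ^ n * z ^ n := by rw [neg_pow]
  rw [hs, hneg, hsin2]
  calc (-1 : ℝ) ^ n * z ^ n / ((n.factorial : ℝ) * Real.Gamma (1 - s))
      = ((-1 : ℝ) ^ n / Real.Gamma (1 - s)) * (z ^ n / (n.factorial : ℝ)) := by ring
    _ = (Real.Gamma s * (2 * Real.sin (Real.pi * s) * Real.cos (Real.pi * s)) / Real.pi) *
          (z ^ n / (n.factorial : ℝ)) := by rw [hkey]
    _ = 1 / Real.pi * ((Real.Gamma s / n.factorial) *
          (2 * Real.sin (Real.pi * s) * Real.cos (Real.pi * s)) * z ^ n) := by ring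

lemma mainardi_term_eq (z : ℝ) (n : ℕ) :
    (-z) ^ n / ((n.factorial : ℝ) * Real.Gamma ((-(1 / 3) : ℝ) * n + 2 / 3)) =
      1 / Real.pi * ((Real.Gamma ((n + 1) / 3) / n.factorial) *
        Real.sin (2 * (n + 1) * Real.pi / 3) * z ^ n) := by
  obtain ⟨k, r, hr, hn⟩ : ∃ k r, r < 3 ∧ n = 3 * k + r := ⟨n / 3, n % 3, by omega, by omega⟩
  interval_cases r
  · -- n = 3k
    have hps : Real.pi * (((n : ℝ) + 1) / 3) = Real.pi / 3 + (k : ℤ) * Real.pi := by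
      subst hn; push_cast; ring
    have hsin : Real.sin (Real.pi * (((n : ℝ) + 1) / 3)) = (-1) ^ k * Real.sin (Real.pi / 3) := by
      rw [hps, Real.sin_add_int_mul_pi, zpow_natCast]
    have hcos : Real.cos (Real.pi * (((n : ℝ) + 1) / 3)) = (-1) ^ k * Real.cos (Real.pi / 3) := by
      rw [hps, Real.cos_add_int_mul_pi, zpow_natCast]
    apply mainardi_term_aux
    · rw [hsin]
      apply mul_ne_zero (pow_ne_zero _ (by norm_num))
      rw [Real.sin_pi_div_three]; positivity
    · rw [hcos, Real.cos_pi_div_three]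
      have : n = 3 * k := by omega
      rw [this, pow_mul]; norm_num; ring
  · -- n = 3k + 1
    have hcval : Real.cos (2 * Real.pi / 3) = -(1 / 2) := by
      have h2 : 2 * Real.pi / 3 = Real.pi - Real.pi / 3 := by ring
      rw [h2, Real.cos_pi_sub, Real.cos_pi_div_three]
    have hsval : Real.sin (2 * Real.pi / 3) = Real.sqrt 3 / 2 := by
      have h2 : 2 * Real.pi / 3 = Real.pi - Real.pi / 3 := by ring
      rw [h2, Real.sin_pi_sub, Real.sin_pi_div_three]
    have hps : Real.pi * (((n : ℝ) + 1) / 3) = 2 * Real.pi / 3 + (k : ℤ) * Real.pi := by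
      subst hn; push_cast; ring
    have hsin : Real.sin (Real.pi * (((n : ℝ) + 1) / 3)) = (-1) ^ k * (Real.sqrt 3 / 2) := by
      rw [hps, Real.sin_add_int_mul_pi, zpow_natCast, hsval]
    have hcos : Real.cos (Real.pi * (((n : ℝ) + 1) / 3)) = (-1) ^ k * (-(1 / 2)) := by
      rw [hps, Real.cos_add_int_mul_pi, zpow_natCast, hcval]
    apply mainardi_term_aux
    · rw [hsin]
      apply mul_ne_zero (pow_ne_zero _ (by norm_num))
      positivity
    · rw [hcos]
      have : n = 3 * k + 1 := by omega
      rw [this, pow_succ, pow_mul]; norm_num; ring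
  · -- n = 3k + 2 : both sides vanish
    have hG : Real.Gamma ((-(1 / 3) : ℝ) * n + 2 / 3) = 0 := by
      have h2 : ((-(1 / 3) : ℝ)) * n + 2 / 3 = -(k : ℝ) := by subst hn; push_cast; ring
      rw [h2, Real.Gamma_neg_nat_eq_zero]
    have hsin : Real.sin (2 * ((n : ℝ) + 1) * Real.pi / 3) = 0 := by
      have h2 : 2 * ((n : ℝ) + 1) * Real.pi / 3 = ((2 * k + 2 : ℤ) : ℝ) * Real.pi := by
        subst hn; push_cast; ring
      rw [h2, Real.sin_int_mul_pi]
    rw [hG, hsin, mul_zero, div_zero, mul_zero, zero_mul, mul_zero]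

/-- `M_{1/3}(z) = 3^{2/3} Ai(z/3^{1/3})` for all real `z`. -/
theorem mainardi_third_eq_airy (z : ℝ) :
    (∑' n : ℕ, (-z) ^ n /
        ((n.factorial : ℝ) * Real.Gamma ((-(1 / 3) : ℝ) * n + 2 / 3)))
      = 3 ^ ((2 : ℝ) / 3) * airyAi (z / 3 ^ ((1 : ℝ) / 3)) := by
  unfold airyAi
  have h13 : (3 : ℝ) ^ ((1 : ℝ) / 3) ≠ 0 := by positivity
  have h23 : (3 : ℝ) ^ ((2 : ℝ) / 3) ≠ 0 := by positivity
  have harg : (3 : ℝ) ^ ((1 : ℝ) / 3) * (z / 3 ^ ((1 : ℝ) / 3)) = z := by field_simp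
  rw [harg, ← mul_assoc]
  have hc : (3 : ℝ) ^ ((2 : ℝ) / 3) * (1 / (3 ^ ((2 : ℝ) / 3) * Real.pi)) = 1 / Real.pi := by
    field_simp
  rw [hc, ← tsum_mul_left]
  exact tsum_congr (mainardi_term_eq z)
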